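/- (Multiple robustness of the efficient influence function, case 𝓜₂: outcome decomposition and treatment propensity score correct, instrument density and data-source propensity arbitrary.) Suppose E(Y | Z, X, R=1) = 𝓗(X)·τ(Z,X) + ω(X) a.s. for measurable functions 𝓗, ω, that P(D=1 | Z,X,R=0) = τ(Z,X) a.s. (propensity score equality), and set Δ := E[𝓗(X) | R=1]. Let λ̄ : {0,1}×𝒳 → ℝ∖{0} and π̄ : {0,1}×𝒳 → (0,1) be arbitrary measurable functions (all displayed integrands integrable). Then E[ (−1)^{1−Z} · { (R/q†)·[Y − 𝓗(X)·τ(Z,X) − ω(X)] − ((1−R)/q†)·(π̄(Z,X)/(1−π̄(Z,X)))·𝓗(X)·[D − τ(Z,X)] } / ( λ̄(Z|X)·[τ(1,X) − τ(0,X)] ) + (R/q†)·(𝓗(X) − Δ) ] = 0. -/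

import Mathlib

open MeasureTheory ProbabilityTheory

/-!
On `{R = 1}` the integrand is `f(Z,X)·(Y − E[Y | Z,X,R=1]) + (𝓗(X) − Δ)/q†` and on `{R = 0}` it is
`f'(Z,X)·(D − P(D=1 | Z,X,R=0))`, where the weights `f, f'` are measurable functions of `(Z,X)`
built from the working models `λ̄, π̄`. By the pull-out property of conditional expectation, a
residual with zero conditional mean given `(Z,X)` has mean zero against any such weight, whatever
`λ̄, π̄` are; and `𝓗(X) − Δ` is centred under `P(· | R=1)`. Splitting `P` into its conditionals
on `{R = 1}` and `{R = 0}` gives the claim.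
-/

section CondMeasure

variable {Ω : Type*} [MeasurableSpace Ω] {μ : Measure Ω} {f : Ω → ℝ}

lemma setIntegral_eq_toReal_mul_integral_cond [IsFiniteMeasure μ] (s : Set Ω) :
    ∫ x in s, f x ∂μ = (μ s).toReal * ∫ x, f x ∂μ[|s] := by
  rcases eq_or_ne (μ s) 0 with hs | hs
  · simp [Measure.restrict_eq_zero.mpr hs, hs]
  rw [ProbabilityTheory.cond, integral_smul_measure, ENNReal.toReal_inv, smul_eq_mul, ← mul_assoc,
    mul_inv_cancel₀ (ENNReal.toReal_ne_zero.mpr ⟨hs, measure_ne_top μ s⟩), one_mul]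

lemma MeasureTheory.Integrable.cond (hf : Integrable f μ) (s : Set Ω) : Integrable f μ[|s] := by
  rcases eq_or_ne (μ s) 0 with hs | hs
  · simp [cond_eq_zero_of_meas_eq_zero hs]
  exact hf.restrict.smul_measure (ENNReal.inv_ne_top.mpr hs)

lemma integral_eq_zero_of_integral_cond_eq_zero [IsFiniteMeasure μ] {s : Set Ω}
    (hs : MeasurableSet s) (hf : Integrable f μ) (h₁ : ∫ x, f x ∂μ[|s] = 0)
    (h₂ : ∫ x, f x ∂μ[|sᶜ] = 0) :
    ∫ x, f x ∂μ = 0 := by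
  rw [← integral_add_compl hs hf, setIntegral_eq_toReal_mul_integral_cond,
    setIntegral_eq_toReal_mul_integral_cond, h₁, h₂, mul_zero, mul_zero, add_zero]

lemma integral_sub_integral_eq_zero [IsZeroOrProbabilityMeasure μ] (hf : Integrable f μ) :
    ∫ x, (f x - ∫ y, f y ∂μ) ∂μ = 0 := by
  rcases eq_zero_or_isProbabilityMeasure μ with rfl | _
  · simp
  · simp [integral_sub hf (integrable_const _)]

end CondMeasure

section Residual

variable {Ω β : Type*} [MeasurableSpace Ω] [mβ : MeasurableSpace β] {μ : Measure Ω}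
  {V : Ω → β} {e φ : Ω → ℝ} {F g : β → ℝ}

lemma integral_eq_zero_of_ae_eq_comp_mul_sub_condExp [IsFiniteMeasure μ] (hV : Measurable V)
    (hF : Measurable F) (hg : Measurable g) (he : Integrable e μ)
    (hcond : μ[e | mβ.comap V] =ᵐ[μ] fun ω => g (V ω)) (hφ : Integrable φ μ)
    (hφeq : φ =ᵐ[μ] fun ω => F (V ω) * (e ω - g (V ω))) :
    ∫ ω, φ ω ∂μ = 0 := by
  have hgV_sm : StronglyMeasurable[mβ.comap V] fun ω => g (V ω) :=
    (hg.comp (comap_measurable V)).stronglyMeasurable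
  have hgV : Integrable (fun ω => g (V ω)) μ := integrable_condExp.congr hcond
  have hresid : μ[fun ω => e ω - g (V ω) | mβ.comap V] =ᵐ[μ] 0 := by
    refine (condExp_sub he hgV _).trans ?_
    rw [condExp_of_stronglyMeasurable hV.comap_le hgV_sm hgV]
    filter_upwards [hcond] with ω hω
    rw [Pi.sub_apply, hω, sub_self, Pi.zero_apply]
  have hpull : μ[φ | mβ.comap V] =ᵐ[μ] 0 := by
    refine (condExp_congr_ae hφeq).trans <| (condExp_mul_of_stronglyMeasurable_left
      (hF.comp (comap_measurable V)).stronglyMeasurable (hφ.congr hφeq) (he.sub hgV)).trans ?_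
    filter_upwards [hresid] with ω hω
    rw [Pi.mul_apply, hω, Pi.zero_apply, mul_zero]
  rw [← integral_condExp hV.comap_le, integral_congr_ae hpull, integral_zero']

lemma integral_eq_zero_of_ae_eq_comp_mul_sub_condExp_add_centered [IsZeroOrProbabilityMeasure μ]
    (hV : Measurable V) (hF : Measurable F) (hg : Measurable g) (he : Integrable e μ)
    (hcond : μ[e | mβ.comap V] =ᵐ[μ] fun ω => g (V ω)) {h : Ω → ℝ} (hh : Integrable h μ) {c : ℝ}
    (hφ : Integrable φ μ)
    (hφeq : φ =ᵐ[μ] fun ω => F (V ω) * (e ω - g (V ω)) + c * (h ω - ∫ ω', h ω' ∂μ)) :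
    ∫ ω, φ ω ∂μ = 0 := by
  have hcent : Integrable (fun ω => c * (h ω - ∫ ω', h ω' ∂μ)) μ :=
    (hh.sub (integrable_const _)).const_mul c
  have hresid : ∫ ω, (φ ω - c * (h ω - ∫ ω', h ω' ∂μ)) ∂μ = 0 := by
    refine integral_eq_zero_of_ae_eq_comp_mul_sub_condExp hV hF hg he hcond (hφ.sub hcent) ?_
    filter_upwards [hφeq] with ω hω
    rw [hω, add_sub_cancel_right]
  rwa [integral_sub hφ hcent, integral_const_mul, integral_sub_integral_eq_zero hh, mul_zero,
    sub_zero] at hresid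

end Residual

theorem stmt_9_general
    {Ω 𝒳 : Type*} [MeasurableSpace Ω] [MeasurableSpace 𝒳]
    (P : Measure Ω) [IsProbabilityMeasure P]
    (R Z D : Ω → Bool) (X : Ω → 𝒳) (Y : Ω → ℝ)
    (hR : Measurable R) (hZ : Measurable Z) (hD : Measurable D)
    (hX : Measurable X) (hYint : Integrable Y P)
    -- τ(z,x) := P(D=1 | Z=z, X=x, R=1), with τ(1,X) − τ(0,X) ≠ 0 a.s. on {R=1}
    (tau : Bool → 𝒳 → ℝ) (htau_meas : Measurable fun p : Bool × 𝒳 => tau p.1 p.2)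
    -- true outcome decomposition: E(Y | Z, X, R=1) = 𝓗(X)·τ(Z,X) + ω(X) a.s.
    (Hfun wfun : 𝒳 → ℝ) (hHfun_meas : Measurable Hfun) (hwfun_meas : Measurable wfun)
    (hout : (P[|{ω | R ω = true}])[Y |
        MeasurableSpace.comap (fun ω => (Z ω, X ω)) inferInstance]
      =ᵐ[P[|{ω | R ω = true}]]
        fun ω => Hfun (X ω) * tau (Z ω) (X ω) + wfun (X ω))
    -- propensity score equality: P(D=1 | Z, X, R=0) = τ(Z,X) a.s.
    (hpse : (fun ω => tau (Z ω) (X ω)) =ᵐ[P[|{ω | R ω = false}]]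
      (P[|{ω | R ω = false}])[(fun ω => if D ω then (1:ℝ) else 0) |
        MeasurableSpace.comap (fun ω => (Z ω, X ω)) inferInstance])
    -- arbitrary measurable working models λ̄ : {0,1}×𝒳 → ℝ∖{0}, π̄ : {0,1}×𝒳 → (0,1)
    (lambar : Bool → 𝒳 → ℝ) (hlambar_meas : Measurable fun p : Bool × 𝒳 => lambar p.1 p.2)
    (pibar : Bool → 𝒳 → ℝ) (hpibar_meas : Measurable fun p : Bool × 𝒳 => pibar p.1 p.2)
    -- integrability of the displayed integrands
    (hHint : Integrable (fun ω => Hfun (X ω)) (P[|{ω | R ω = true}]))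
    (hint : Integrable (fun ω =>
        (if Z ω then (1:ℝ) else -1) *
            ((if R ω then (1:ℝ) else 0) / (P {ω | R ω = true}).toReal *
                (Y ω - Hfun (X ω) * tau (Z ω) (X ω) - wfun (X ω)) -
              (if R ω then (0:ℝ) else 1) / (P {ω | R ω = true}).toReal *
                (pibar (Z ω) (X ω) / (1 - pibar (Z ω) (X ω))) * Hfun (X ω) *
                ((if D ω then (1:ℝ) else 0) - tau (Z ω) (X ω))) /
            (lambar (Z ω) (X ω) * (tau true (X ω) - tau false (X ω))) +
          (if R ω then (1:ℝ) else 0) / (P {ω | R ω = true}).toReal *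
            (Hfun (X ω) - ∫ ω', Hfun (X ω') ∂(P[|{ω | R ω = true}]))) P) :
    -- conclusion: mean zero, with Δ := E[𝓗(X) | R=1]
    ∫ ω,
        ((if Z ω then (1:ℝ) else -1) *
            ((if R ω then (1:ℝ) else 0) / (P {ω | R ω = true}).toReal *
                (Y ω - Hfun (X ω) * tau (Z ω) (X ω) - wfun (X ω)) -
              (if R ω then (0:ℝ) else 1) / (P {ω | R ω = true}).toReal *
                (pibar (Z ω) (X ω) / (1 - pibar (Z ω) (X ω))) * Hfun (X ω) *
                ((if D ω then (1:ℝ) else 0) - tau (Z ω) (X ω))) /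
            (lambar (Z ω) (X ω) * (tau true (X ω) - tau false (X ω))) +
          (if R ω then (1:ℝ) else 0) / (P {ω | R ω = true}).toReal *
            (Hfun (X ω) - ∫ ω', Hfun (X ω') ∂(P[|{ω | R ω = true}]))) ∂P = 0 := by
  set S : Set Ω := {ω | R ω = true}
  set q : ℝ := (P S).toReal
  have hS : MeasurableSet S := hR (measurableSet_singleton true)
  have hT : MeasurableSet {ω | R ω = false} := hR (measurableSet_singleton false)
  have hSc : Sᶜ = {ω | R ω = false} := by ext; simp [S]
  have hZX : Measurable fun ω => (Z ω, X ω) := hZ.prodMk hX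
  have htau : ∀ b, Measurable (tau b) := fun _ => htau_meas.of_uncurry_left
  have hlambar : ∀ b, Measurable (lambar b) := fun _ => hlambar_meas.of_uncurry_left
  have hpibar : ∀ b, Measurable (pibar b) := fun _ => hpibar_meas.of_uncurry_left
  refine integral_eq_zero_of_integral_cond_eq_zero hS hint ?_ ?_
  · refine integral_eq_zero_of_ae_eq_comp_mul_sub_condExp_add_centered hZX
      (F := fun p => (if p.1 then (1:ℝ) else -1) / q /
        (lambar p.1 p.2 * (tau true p.2 - tau false p.2)))
      (g := fun p => Hfun p.2 * tau p.1 p.2 + wfun p.2)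
      (measurable_from_prod_countable_right fun b => by dsimp only; split_ifs <;> fun_prop)
      (measurable_from_prod_countable_right fun b => by dsimp only; fun_prop)
      (hYint.cond S) hout hHint (c := 1 / q) (hint.cond S) ?_
    filter_upwards [ae_cond_mem hS] with ω (hω : R ω = true)
    simp only [hω, if_true]
    ring
  · rw [hSc]
    have hDint : Integrable (fun ω => if D ω then (1:ℝ) else 0) P[|{ω | R ω = false}] :=
      .of_bound ((measurable_of_countable fun b : Bool => if b then (1:ℝ) else 0).comp
        hD).aestronglyMeasurable 1 (.of_forall fun ω => by cases D ω <;> simp)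
    refine integral_eq_zero_of_ae_eq_comp_mul_sub_condExp hZX
      (F := fun p => -((if p.1 then (1:ℝ) else -1) * (pibar p.1 p.2 / (1 - pibar p.1 p.2)) *
        Hfun p.2) / q / (lambar p.1 p.2 * (tau true p.2 - tau false p.2)))
      (measurable_from_prod_countable_right fun b => by dsimp only; split_ifs <;> fun_prop)
      htau_meas hDint hpse.symm (hint.cond _) ?_
    filter_upwards [ae_cond_mem hT] with ω (hω : R ω = false)
    simp only [hω, Bool.false_eq_true, if_false]
    ring

/-- Multiple robustness, case 𝓜₂: outcome decomposition and treatment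
propensity score are correct, while the instrument density `λ̄` and data-source propensity
`π̄` working models are arbitrary. Then the efficient influence function has mean zero. -/
theorem stmt_9
    {Ω 𝒳 : Type*} [MeasurableSpace Ω] [MeasurableSpace 𝒳] [StandardBorelSpace 𝒳]
    (P : Measure Ω) [IsProbabilityMeasure P]
    (R Z D : Ω → Bool) (X : Ω → 𝒳) (Y : Ω → ℝ)
    (hR : Measurable R) (hZ : Measurable Z) (hD : Measurable D)
    (hX : Measurable X) (hY : Measurable Y) (hYint : Integrable Y P)
    -- q† := P(R=1) ∈ (0,1)
    (hq : 0 < P {ω | R ω = true} ∧ P {ω | R ω = true} < 1)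
    -- τ(z,x) := P(D=1 | Z=z, X=x, R=1), with τ(1,X) − τ(0,X) ≠ 0 a.s. on {R=1}
    (tau : Bool → 𝒳 → ℝ) (htau_meas : Measurable fun p : Bool × 𝒳 => tau p.1 p.2)
    (htau_ver : (fun ω => tau (Z ω) (X ω)) =ᵐ[P[|{ω | R ω = true}]]
      (P[|{ω | R ω = true}])[(fun ω => if D ω then (1:ℝ) else 0) |
        MeasurableSpace.comap (fun ω => (Z ω, X ω)) inferInstance])
    (htau_ne : ∀ᵐ ω ∂(P[|{ω | R ω = true}]), tau true (X ω) - tau false (X ω) ≠ 0)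
    -- true outcome decomposition: E(Y | Z, X, R=1) = 𝓗(X)·τ(Z,X) + ω(X) a.s.
    (Hfun wfun : 𝒳 → ℝ) (hHfun_meas : Measurable Hfun) (hwfun_meas : Measurable wfun)
    (hout : (P[|{ω | R ω = true}])[Y |
        MeasurableSpace.comap (fun ω => (Z ω, X ω)) inferInstance]
      =ᵐ[P[|{ω | R ω = true}]]
        fun ω => Hfun (X ω) * tau (Z ω) (X ω) + wfun (X ω))
    -- propensity score equality: P(D=1 | Z, X, R=0) = τ(Z,X) a.s.
    (hpse : (fun ω => tau (Z ω) (X ω)) =ᵐ[P[|{ω | R ω = false}]]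
      (P[|{ω | R ω = false}])[(fun ω => if D ω then (1:ℝ) else 0) |
        MeasurableSpace.comap (fun ω => (Z ω, X ω)) inferInstance])
    -- arbitrary measurable working models λ̄ : {0,1}×𝒳 → ℝ∖{0}, π̄ : {0,1}×𝒳 → (0,1)
    (lambar : Bool → 𝒳 → ℝ) (hlambar_meas : Measurable fun p : Bool × 𝒳 => lambar p.1 p.2)
    (hlambar_ne : ∀ z x, lambar z x ≠ 0)
    (pibar : Bool → 𝒳 → ℝ) (hpibar_meas : Measurable fun p : Bool × 𝒳 => pibar p.1 p.2)
    (hpibar_range : ∀ z x, 0 < pibar z x ∧ pibar z x < 1)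
    -- integrability of the displayed integrands
    (hHint : Integrable (fun ω => Hfun (X ω)) (P[|{ω | R ω = true}]))
    (hint : Integrable (fun ω =>
        (if Z ω then (1:ℝ) else -1) *
            ((if R ω then (1:ℝ) else 0) / (P {ω | R ω = true}).toReal *
                (Y ω - Hfun (X ω) * tau (Z ω) (X ω) - wfun (X ω)) -
              (if R ω then (0:ℝ) else 1) / (P {ω | R ω = true}).toReal *
                (pibar (Z ω) (X ω) / (1 - pibar (Z ω) (X ω))) * Hfun (X ω) *
                ((if D ω then (1:ℝ) else 0) - tau (Z ω) (X ω))) /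
            (lambar (Z ω) (X ω) * (tau true (X ω) - tau false (X ω))) +
          (if R ω then (1:ℝ) else 0) / (P {ω | R ω = true}).toReal *
            (Hfun (X ω) - ∫ ω', Hfun (X ω') ∂(P[|{ω | R ω = true}]))) P) :
    -- conclusion: mean zero, with Δ := E[𝓗(X) | R=1]
    ∫ ω,
        ((if Z ω then (1:ℝ) else -1) *
            ((if R ω then (1:ℝ) else 0) / (P {ω | R ω = true}).toReal *
                (Y ω - Hfun (X ω) * tau (Z ω) (X ω) - wfun (X ω)) -
              (if R ω then (0:ℝ) else 1) / (P {ω | R ω = true}).toReal *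
                (pibar (Z ω) (X ω) / (1 - pibar (Z ω) (X ω))) * Hfun (X ω) *
                ((if D ω then (1:ℝ) else 0) - tau (Z ω) (X ω))) /
            (lambar (Z ω) (X ω) * (tau true (X ω) - tau false (X ω))) +
          (if R ω then (1:ℝ) else 0) / (P {ω | R ω = true}).toReal *
            (Hfun (X ω) - ∫ ω', Hfun (X ω') ∂(P[|{ω | R ω = true}]))) ∂P = 0 :=
  stmt_9_general P R Z D X Y hR hZ hD hX hYint tau htau_meas Hfun wfun hHfun_meas hwfun_meas hout
    hpse lambar hlambar_meas pibar hpibar_meas hHint hint
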